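/- arXiv:1306.4242 — 3 statements merged into one kernel-verified Lean document; each statement's English description precedes it below -/
import Mathlib

section
/- Byzantine-resilient convergence is impossible for n ≤ 2f robots under fully synchronous demons on the rational line: if the correct robots can be put in bijection with a subset of the Byzantine robots (i.e. there are at least as many Byzantine robots as correct robots) and there are at least two correct robots, then no robogram is a solution to convergence with respect to fully synchronous demons. -/
/-- A position: locations (rationals) of correct robots (`G`) and Byzantine robots (`B`). -/
structure Position (G B : Type) where
  gp : G → ℚ
  bp : B → ℚ

/-- Location of a robot identified by an element of `G ⊕ B`. -/
def locate {G B : Type} (p : Position G B) : G ⊕ B → ℚ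
  | Sum.inl g => p.gp g
  | Sum.inr b => p.bp b

/-- The similarity `[[k,t]] : x ↦ k·(x − t)` applied pointwise to a position. -/
def simPos {G B : Type} (k t : ℚ) (p : Position G B) : Position G B :=
  ⟨fun g => k * (p.gp g - t), fun b => k * (p.bp b - t)⟩

/-- Permuting the identifiers of a position by `σ`. -/
def applyPerm {G B : Type} (σ : Equiv.Perm (G ⊕ B)) (p : Position G B) : Position G B :=
  ⟨fun g => locate p (σ (Sum.inl g)), fun b => locate p (σ (Sum.inr b))⟩

/-- Pointwise translation of a position by `c`. -/
def translatePos {G B : Type} (c : ℚ) (p : Position G B) : Position G B :=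
  ⟨fun g => p.gp g + c, fun b => p.bp b + c⟩

/-- Pointwise scalar multiplication of a position. -/
def smulPos {G B : Type} (l : ℚ) (p : Position G B) : Position G B :=
  ⟨fun g => l * p.gp g, fun b => l * p.bp b⟩

/-- A robogram: an algorithm invariant under permutations of identifiers. -/
structure Robogram (G B : Type) where
  algo : Position G B → ℚ
  AlgoMorph : ∀ (p q : Position G B) (σ : Equiv.Perm (G ⊕ B)),
    (∀ id, locate q id = locate p (σ⁻¹ id)) → algo p = algo q

/-- A demonic action: positions of Byzantine robots and frame factors of correct robots. -/
structure DemonicAction (G B : Type) where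
  locate_byz : B → ℚ
  frame : G → ℚ

/-- A demon is an infinite stream of demonic actions. -/
abbrev Demon (G B : Type) := Stream' (DemonicAction G B)

/-- A demon is locally fair for robot `g` if `g` is activated by the head action,
or the head does not activate it and the tail is locally fair for it. -/
inductive LocallyFairForOne {G B : Type} (g : G) : Demon G B → Prop
  | immediately (d : Demon G B) :
      (Stream'.head d).frame g ≠ 0 → LocallyFairForOne g d
  | later (d : Demon G B) :
      (Stream'.head d).frame g = 0 → LocallyFairForOne g (Stream'.tail d) →
      LocallyFairForOne g d

/-- Coinductive fairness: every suffix of the demon is locally fair for every robot. -/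
def Fair {G B : Type} (d : Demon G B) : Prop :=
  ∀ n : ℕ, ∀ g : G, LocallyFairForOne g (Stream'.drop n d)

/-- A fully synchronous demon activates every robot at every round. -/
def FullySynchronous {G B : Type} (d : Demon G B) : Prop :=
  ∀ (n : ℕ) (g : G), (Stream'.get d n).frame g ≠ 0

/-- One round: a robot `g` activated with factor `k ≠ 0` at location `t`
moves to `t + (1/k) · algo([[k,t]](position))`. -/
def roundR {G B : Type} (r : Robogram G B) (da : DemonicAction G B) (gp : G → ℚ) : G → ℚ :=
  fun g =>
    let k := da.frame g
    let t := gp g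
    if k = 0 then t
    else t + (1 / k) * r.algo (simPos k t ⟨gp, da.locate_byz⟩)

/-- The locations of correct robots after `n` rounds. -/
def executeN {G B : Type} (r : Robogram G B) (d : Demon G B) (gp : G → ℚ) : ℕ → (G → ℚ)
  | 0 => gp
  | n + 1 => roundR r (Stream'.get d n) (executeN r d gp n)

/-- The execution of robogram `r` from initial position `gp` under demon `d`. -/
def execute {G B : Type} (r : Robogram G B) (d : Demon G B) (gp : G → ℚ) :
    Stream' (G → ℚ) :=
  executeN r d gp

/-- Coinductive imprisonment: at every round every correct robot stays within `ε` of `c`. -/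
def Imprisonned {G : Type} (c ε : ℚ) (e : Stream' (G → ℚ)) : Prop :=
  ∀ (n : ℕ) (g : G), |c - Stream'.get e n g| ≤ ε

/-- Inductive attraction: the execution is eventually imprisonned. -/
inductive Attracted {G : Type} (c ε : ℚ) : Stream' (G → ℚ) → Prop
  | captured (e : Stream' (G → ℚ)) : Imprisonned c ε e → Attracted c ε e
  | later (e : Stream' (G → ℚ)) : Attracted c ε (Stream'.tail e) → Attracted c ε e

/-- A robogram solves convergence w.r.t. fair demons. -/
def solution {G B : Type} (r : Robogram G B) : Prop :=
  ∀ gp : G → ℚ, ∀ d : Demon G B, Fair d →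
    ∀ ε : ℚ, 0 < ε → ∃ lim : ℚ, Attracted lim ε (execute r d gp)

/-- A robogram solves convergence w.r.t. fully synchronous demons. -/
def solutionFSYNC {G B : Type} (r : Robogram G B) : Prop :=
  ∀ gp : G → ℚ, ∀ d : Demon G B, FullySynchronous d →
    ∀ ε : ℚ, 0 < ε → ∃ lim : ℚ, Attracted lim ε (execute r d gp)

open Classical in
noncomputable def swapFun {G B : Type} (ι : G ↪ B) (S : Set G) : G ⊕ B → G ⊕ B
  | Sum.inl g => if g ∈ S then Sum.inr (ι g) else Sum.inl g
  | Sum.inr b => if h : ∃ g ∈ S, ι g = b then Sum.inl h.choose else Sum.inr b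

open Classical in
lemma swapFun_invol {G B : Type} (ι : G ↪ B) (S : Set G) :
    Function.Involutive (swapFun ι S) := by
  intro id
  match id with
  | Sum.inl g =>
    by_cases hg : g ∈ S
    · simp only [swapFun, if_pos hg]
      have h : ∃ g' ∈ S, ι g' = ι g := ⟨g, hg, rfl⟩
      simp only [swapFun, dif_pos h]
      have h2 := h.choose_spec
      have : h.choose = g := ι.injective h2.2
      rw [this]
    · simp [swapFun, if_neg hg]
  | Sum.inr b =>
    by_cases h : ∃ g ∈ S, ι g = b
    · simp only [swapFun, dif_pos h]
      have hs := h.choose_spec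
      simp only [swapFun, if_pos hs.1, hs.2]
    · simp [swapFun, dif_neg h]

lemma attracted_exists {G : Type} {c ε : ℚ} {e : Stream' (G → ℚ)} (h : Attracted c ε e) :
    ∃ m, ∀ n g, |c - Stream'.get e (n + m) g| ≤ ε := by
  induction h with
  | captured e h => exact ⟨0, fun n g => h (n + 0) g⟩
  | later e h ih =>
    obtain ⟨m, hm⟩ := ih
    refine ⟨m + 1, fun n g => ?_⟩
    have h2 := hm n g
    rw [Stream'.get_tail] at h2
    have h3 : n + (m + 1) = n + m + 1 := by omega
    rw [h3]
    exact h2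

/-- convergence is impossible for `n ≤ 2f` under fully synchronous
demons: with at least two correct robots and at least as many Byzantine robots as
correct ones, no robogram is a FSYNC solution. -/
theorem no_solution_FSYNC_2f {G B : Type} [Fintype G] [Fintype B]
    (h2 : 2 ≤ Fintype.card G) (hB : Fintype.card G ≤ Fintype.card B)
    (r : Robogram G B) :
    ¬ solutionFSYNC r := by
  classical
  intro hsol
  obtain ⟨ι⟩ := Function.Embedding.nonempty_of_card_le hB
  obtain ⟨g₀⟩ : Nonempty G := Fintype.card_pos_iff.mp (by omega)
  set p : Position G B :=
    ⟨fun _ => 0, fun b => if ∃ g, ι g = b then 1 else 1/2⟩ with hp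
  set δ := r.algo p with hδ
  by_cases hδ0 : δ = 0
  · -- stationary split configuration
    set gp : G → ℚ := fun g => if g = g₀ then 0 else 1 with hgp
    set byz : B → ℚ := fun b =>
      if b = ι g₀ then 1 else if ∃ g, ι g = b then 0 else 1/2 with hbyz
    set d2 : Demon G B :=
      fun _ => ⟨byz, fun g => if g = g₀ then 1 else -1⟩ with hd2
    have hfs : FullySynchronous d2 := by
      intro n g
      show (if g = g₀ then (1:ℚ) else -1) ≠ 0
      split <;> norm_num
    -- observation of robot g₀
    have halgo0 : r.algo (simPos 1 0 ⟨gp, byz⟩) = 0 := by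
      set σ := Function.Involutive.toPerm _ (swapFun_invol ι {g | g ≠ g₀}) with hσ
      have key : ∀ id, locate (simPos 1 0 ⟨gp, byz⟩) id = locate p (σ⁻¹ id) := by
        intro id
        have hσi : ∀ x, σ⁻¹ x = swapFun ι {g | g ≠ g₀} x := fun x => rfl
        rw [hσi]
        match id with
        | Sum.inl g =>
          by_cases hg : g = g₀
          · rw [hg]
            have hs : swapFun ι {g | g ≠ g₀} (Sum.inl g₀) = Sum.inl g₀ := by
              simp [swapFun]
            rw [hs]
            show (1:ℚ) * (gp g₀ - 0) = 0
            have hv : gp g₀ = 0 := if_pos rfl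
            rw [hv]; ring
          · have hs : swapFun ι {g | g ≠ g₀} (Sum.inl g) = Sum.inr (ι g) := by
              simp [swapFun, hg]
            rw [hs]
            show (1:ℚ) * (gp g - 0) = if ∃ g', ι g' = ι g then (1:ℚ) else 1/2
            rw [if_pos ⟨g, rfl⟩]
            have hv : gp g = 1 := if_neg hg
            rw [hv]; ring
        | Sum.inr b =>
          show locate _ _ = locate p (swapFun ι {g | g ≠ g₀} (Sum.inr b))
          simp only [swapFun]
          split
          · next h =>
            obtain ⟨g, hgS, hgb⟩ := h
            have hb0 : ¬ b = ι g₀ := by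
              intro hc; exact hgS (ι.injective (hgb.trans hc))
            have hex : ∃ g', ι g' = b := ⟨g, hgb⟩
            show (1:ℚ) * (byz b - 0) = 0
            have hv : byz b = 0 := (if_neg hb0).trans (if_pos hex)
            rw [hv]; ring
          · next h =>
            show (1:ℚ) * (byz b - 0) = if ∃ g, ι g = b then (1:ℚ) else 1/2
            by_cases hb0 : b = ι g₀
            · have hex : ∃ g, ι g = b := ⟨g₀, hb0.symm⟩
              have hv : byz b = 1 := if_pos hb0
              rw [hv, if_pos hex]; ring
            · have hnr : ¬ ∃ g, ι g = b := by
                rintro ⟨g, rfl⟩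
                exact h ⟨g, fun hgg => hb0 (by rw [hgg]), rfl⟩
              have hv : byz b = 1/2 := (if_neg hb0).trans (if_neg hnr)
              rw [hv, if_neg hnr]; ring
      have := r.AlgoMorph p (simPos 1 0 ⟨gp, byz⟩) σ key
      rw [← this, ← hδ, hδ0]
    -- observation of robots g ≠ g₀
    have halgo1 : r.algo (simPos (-1) 1 ⟨gp, byz⟩) = 0 := by
      set τ := Function.Involutive.toPerm _ (swapFun_invol ι {g | g = g₀}) with hτ
      have key : ∀ id, locate (simPos (-1) 1 ⟨gp, byz⟩) id = locate p (τ⁻¹ id) := by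
        intro id
        have hτi : ∀ x, τ⁻¹ x = swapFun ι {g | g = g₀} x := fun x => rfl
        rw [hτi]
        match id with
        | Sum.inl g =>
          by_cases hg : g = g₀
          · rw [hg]
            have hs : swapFun ι {g | g = g₀} (Sum.inl g₀) = Sum.inr (ι g₀) := by
              simp [swapFun]
            rw [hs]
            show (-1:ℚ) * (gp g₀ - 1) = if ∃ g', ι g' = ι g₀ then (1:ℚ) else 1/2
            rw [if_pos ⟨g₀, rfl⟩]
            have hv : gp g₀ = 0 := if_pos rfl
            rw [hv]; ring
          · have hs : swapFun ι {g | g = g₀} (Sum.inl g) = Sum.inl g := by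
              simp [swapFun, hg]
            rw [hs]
            show (-1:ℚ) * (gp g - 1) = 0
            have hv : gp g = 1 := if_neg hg
            rw [hv]; ring
        | Sum.inr b =>
          show locate _ _ = locate p (swapFun ι {g | g = g₀} (Sum.inr b))
          simp only [swapFun]
          split
          · next h =>
            obtain ⟨g, hgS, hgb⟩ := h
            have hb0 : b = ι g₀ := by rw [← hgb, show g = g₀ from hgS]
            show (-1:ℚ) * (byz b - 1) = 0
            have hv : byz b = 1 := if_pos hb0
            rw [hv]; ring
          · next h =>
            have hb0 : ¬ b = ι g₀ := fun hc => h ⟨g₀, rfl, hc.symm⟩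
            show (-1:ℚ) * (byz b - 1) = if ∃ g, ι g = b then (1:ℚ) else 1/2
            by_cases hnr : ∃ g, ι g = b
            · have hv : byz b = 0 := (if_neg hb0).trans (if_pos hnr)
              rw [hv, if_pos hnr]; ring
            · have hv : byz b = 1/2 := (if_neg hb0).trans (if_neg hnr)
              rw [hv, if_neg hnr]; ring
      have := r.AlgoMorph p (simPos (-1) 1 ⟨gp, byz⟩) τ key
      rw [← this, ← hδ, hδ0]
    -- the execution is stationary
    have hstat : ∀ n, executeN r d2 gp n = gp := by
      intro n
      induction n with
      | zero => rfl
      | succ n ih =>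
        show roundR r (Stream'.get d2 n) (executeN r d2 gp n) = gp
        rw [ih]
        funext g
        show (if (Stream'.get d2 n).frame g = 0 then gp g
          else gp g + (1/(Stream'.get d2 n).frame g) *
            r.algo (simPos ((Stream'.get d2 n).frame g) (gp g)
              ⟨gp, (Stream'.get d2 n).locate_byz⟩)) = gp g
        have hbz : (Stream'.get d2 n).locate_byz = byz := rfl
        by_cases hg : g = g₀
        · have hf : (Stream'.get d2 n).frame g = 1 := if_pos hg
          have ht : gp g = 0 := if_pos hg
          rw [hf, ht, hbz, if_neg (one_ne_zero), halgo0]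
          norm_num
        · have hf : (Stream'.get d2 n).frame g = -1 := if_neg hg
          have ht : gp g = 1 := if_neg hg
          rw [hf, ht, hbz, if_neg (by norm_num : (-1:ℚ) ≠ 0), halgo1]
          norm_num
    obtain ⟨c, hatt⟩ := hsol gp d2 hfs (1/4) (by norm_num)
    obtain ⟨m, hm⟩ := attracted_exists hatt
    obtain ⟨g₁, hg₁⟩ := Fintype.exists_ne_of_one_lt_card (by omega) g₀
    have h0 := hm 0 g₀
    have h1 := hm 0 g₁
    have he : ∀ k g, Stream'.get (execute r d2 gp) k g = gp g := by
      intro k g; show executeN r d2 gp k g = gp g; rw [hstat]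
    rw [he] at h0 h1
    have hgp0 : gp g₀ = 0 := if_pos rfl
    have hgp1 : gp g₁ = 1 := if_neg hg₁
    rw [hgp0] at h0; rw [hgp1] at h1
    rw [abs_le] at h0 h1
    linarith [h0.1, h0.2, h1.1, h1.2]
  · -- diverging execution: all correct robots together
    set gp : G → ℚ := fun _ => 0 with hgp
    set d1 : Demon G B := fun n =>
      ⟨fun b => n * δ + (if ∃ g, ι g = b then 1 else 1/2), fun _ => 1⟩ with hd1
    have hfs : FullySynchronous d1 := by
      intro n g; show (1:ℚ) ≠ 0; norm_num
    have hrun : ∀ n, executeN r d1 gp n = fun _ => n * δ := by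
      intro n
      induction n with
      | zero =>
        funext g
        show (0:ℚ) = ((0:ℕ):ℚ) * δ
        norm_num
      | succ n ih =>
        show roundR r (Stream'.get d1 n) (executeN r d1 gp n) = _
        rw [ih]
        funext g
        show (if (1:ℚ) = 0 then (n:ℚ) * δ
          else (n:ℚ) * δ + (1/1) * r.algo (simPos 1 ((n:ℚ)*δ)
            ⟨fun _ => (n:ℚ)*δ, (Stream'.get d1 n).locate_byz⟩)) = ((n+1:ℕ):ℚ) * δ
        rw [if_neg (by norm_num)]
        have hpos : simPos 1 ((n:ℚ)*δ)
            ⟨fun _ => (n:ℚ)*δ, (Stream'.get d1 n).locate_byz⟩ = p := by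
          show simPos 1 ((n:ℚ)*δ)
            ⟨fun _ => (n:ℚ)*δ, fun b => (n:ℚ) * δ + (if ∃ g, ι g = b then 1 else 1/2)⟩ = p
          rw [hp]
          simp only [simPos]
          congr 1
          · funext g'; ring
          · funext b; ring
        rw [hpos, ← hδ]
        push_cast
        ring
    obtain ⟨c, hatt⟩ := hsol gp d1 hfs 1 one_pos
    obtain ⟨m, hm⟩ := attracted_exists hatt
    have hδpos : 0 < |δ| := abs_pos.mpr hδ0
    obtain ⟨n, hn⟩ := exists_nat_gt ((|c| + 2) / |δ|)
    have hn2 : |c| + 2 < (n:ℚ) * |δ| := by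
      rwa [div_lt_iff₀ hδpos] at hn
    have hkey := hm n g₀
    have he : Stream'.get (execute r d1 gp) (n + m) g₀ = ((n:ℚ) + (m:ℚ)) * δ := by
      show executeN r d1 gp (n + m) g₀ = _
      rw [hrun]
      push_cast
      ring
    rw [he] at hkey
    have habs : |(n:ℚ) + (m:ℚ)| * |δ| - |c| ≤ |c - ((n:ℚ) + (m:ℚ)) * δ| := by
      have h4 := abs_sub_abs_le_abs_sub (((n:ℚ) + (m:ℚ)) * δ) c
      rw [abs_sub_comm, abs_mul] at h4
      linarith
    have habsnn : |(n:ℚ) + (m:ℚ)| = (n:ℚ) + (m:ℚ) := by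
      rw [abs_of_nonneg]; positivity
    rw [habsnn] at habs
    have hm0 : (0:ℚ) ≤ (m:ℚ) := Nat.cast_nonneg m
    nlinarith [abs_nonneg δ]
end

section
/- Byzantine-resilient convergence is impossible for 2f < n ≤ 3f under fair semi-synchronous demons on the rational line: if the set of correct robots has the cardinality of B ⊎ G' ⊎ G' where the Byzantine set has cardinality |B ⊎ G'| (so correct robots number at most twice, and more than once, the Byzantine ones, totaling n ≤ 3f with n > 2f), with at least one correct robot, then no robogram is a solution to convergence with respect to fair demons. -/
namespace Impossibility

/-- Context: identifications of the robot sets with `Fin`, plus the robogram. -/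
structure Ctx (G B : Type) (b g' : ℕ) where
  e : G ≃ Fin (b + g' + g')
  eB : B ≃ Fin (b + g')
  r : Robogram G B

namespace Ctx

variable {G B : Type} {b g' : ℕ} (C : Ctx G B b g')

/-- canonical symmetric position observed by tower-0 robots -/
def pM : Position G B :=
  ⟨fun g => if (C.e g : ℕ) < b + g' then 0 else 1,
   fun x => if (C.eB x : ℕ) < b then 0 else -1⟩

/-- canonical symmetric position observed by tower-1 robots -/
def pM' : Position G B :=
  ⟨fun g => if (C.e g : ℕ) < b + g' then -1 else 0, fun _ => 1⟩

def d0 : ℚ := C.r.algo C.pM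
def d1 : ℚ := C.r.algo C.pM'
def e0 : ℚ := if 0 ≤ C.d0 then -1 else 1
def e1 : ℚ := if 0 ≤ C.d1 then 1 else -1

lemma e0_ne : C.e0 ≠ 0 := by unfold e0; split <;> norm_num
lemma e1_ne : C.e1 ≠ 0 := by unfold e1; split <;> norm_num

lemma e0_inv : C.e0⁻¹ = C.e0 := by unfold e0; split <;> norm_num
lemma e1_inv : C.e1⁻¹ = C.e1 := by unfold e1; split <;> norm_num

lemma e0_mul : C.e0 * C.d0 = -|C.d0| := by
  unfold e0; split
  · rw [abs_of_nonneg (by assumption)]; ring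
  · rw [abs_of_neg (lt_of_not_ge (by assumption))]; ring

lemma e1_mul : C.e1 * C.d1 = |C.d1| := by
  unfold e1; split
  · rw [abs_of_nonneg (by assumption)]; ring
  · rw [abs_of_neg (lt_of_not_ge (by assumption))]; ring

/-- positions of the two towers over time -/
def st : ℕ → ℚ × ℚ
  | 0 => (0, 1)
  | n+1 =>
    if Even n then
      ((st n).1 - ((st n).2 - (st n).1) * |C.d0|, (st n).2)
    else
      ((st n).1, (st n).2 + ((st n).2 - (st n).1) * |C.d1|)

lemma one_le_gap : ∀ n, 1 ≤ (C.st n).2 - (C.st n).1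
  | 0 => by simp [st]
  | n+1 => by
    have ih := one_le_gap n
    have h0 : 0 ≤ |C.d0| := abs_nonneg _
    have h1 : 0 ≤ |C.d1| := abs_nonneg _
    unfold st
    split <;> dsimp <;> nlinarith

lemma gap_ne (n : ℕ) : (C.st n).2 - (C.st n).1 ≠ 0 := by
  have := C.one_le_gap n; intro h; rw [h] at this; norm_num at this

/-- the demon -/
def dem : Demon G B := fun n =>
  if Even n then
    { locate_byz := fun x =>
        if (C.eB x : ℕ) < b then (C.st n).1 else 2*(C.st n).1 - (C.st n).2,
      frame := fun g =>
        if (C.e g : ℕ) < b + g' then C.e0 / ((C.st n).2 - (C.st n).1) else 0 }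
  else
    { locate_byz := fun _ => 2*(C.st n).2 - (C.st n).1,
      frame := fun g =>
        if (C.e g : ℕ) < b + g' then 0 else C.e1 / ((C.st n).2 - (C.st n).1) }

/-- mirror permutation for tower-0 view: swaps tower-1 goods with the far byzantines -/
def f0 : G ⊕ B → G ⊕ B
  | Sum.inl g =>
    if _h : b + g' ≤ (C.e g : ℕ) then
      Sum.inr (C.eB.symm ⟨(C.e g : ℕ) - g', by have := (C.e g).isLt; omega⟩)
    else Sum.inl g
  | Sum.inr x =>
    if _h : b ≤ (C.eB x : ℕ) then
      Sum.inl (C.e.symm ⟨(C.eB x : ℕ) + g', by have := (C.eB x).isLt; omega⟩)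
    else Sum.inr x

lemma f0_f0 : ∀ i, C.f0 (C.f0 i) = i := by
  rintro (g | x)
  · by_cases h : b + g' ≤ (C.e g : ℕ)
    · rw [f0, dif_pos h, f0]
      rw [dif_pos (by simp only [Equiv.apply_symm_apply]; omega)]
      simp only [Equiv.apply_symm_apply]
      congr 1
      have : (C.e g : ℕ) - g' + g' = (C.e g : ℕ) := by omega
      simp only [this, Fin.eta, Equiv.symm_apply_apply]
    · rw [f0, dif_neg h, f0, dif_neg h]
  · by_cases h : b ≤ (C.eB x : ℕ)
    · rw [f0, dif_pos h, f0]
      rw [dif_pos (by simp only [Equiv.apply_symm_apply]; omega)]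
      simp only [Equiv.apply_symm_apply]
      congr 1
      have : (C.eB x : ℕ) + g' - g' = (C.eB x : ℕ) := by omega
      simp only [this, Fin.eta, Equiv.symm_apply_apply]
    · rw [f0, dif_neg h, f0, dif_neg h]

def σ0 : Equiv.Perm (G ⊕ B) := ⟨C.f0, C.f0, C.f0_f0, C.f0_f0⟩

lemma σ0_inv (i : G ⊕ B) : (C.σ0⁻¹ : Equiv.Perm (G ⊕ B)) i = C.f0 i := rfl

/-- mirror permutation for tower-1 view: swaps tower-0 goods with all byzantines -/
def f1 : G ⊕ B → G ⊕ B
  | Sum.inl g =>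
    if h : (C.e g : ℕ) < b + g' then Sum.inr (C.eB.symm ⟨(C.e g : ℕ), h⟩)
    else Sum.inl g
  | Sum.inr x => Sum.inl (C.e.symm ⟨(C.eB x : ℕ), by have := (C.eB x).isLt; omega⟩)

lemma f1_f1 : ∀ i, C.f1 (C.f1 i) = i := by
  rintro (g | x)
  · by_cases h : (C.e g : ℕ) < b + g'
    · rw [f1, dif_pos h, f1]
      simp only [Equiv.apply_symm_apply]
      congr 1
      simp only [Fin.eta, Equiv.symm_apply_apply]
    · rw [f1, dif_neg h, f1, dif_neg h]
  · rw [f1, f1]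
    rw [dif_pos (by simp only [Equiv.apply_symm_apply]; exact (C.eB x).isLt)]
    simp only [Equiv.apply_symm_apply]
    congr 1
    simp only [Fin.eta, Equiv.symm_apply_apply]

def σ1 : Equiv.Perm (G ⊕ B) := ⟨C.f1, C.f1, C.f1_f1, C.f1_f1⟩

lemma σ1_inv (i : G ⊕ B) : (C.σ1⁻¹ : Equiv.Perm (G ⊕ B)) i = C.f1 i := rfl

/-- the view of an activated tower-0 robot always computes `d0` -/
lemma algo_obs0 :
    C.r.algo ⟨fun g => if (C.e g : ℕ) < b + g' then 0 else C.e0,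
              fun x => if (C.eB x : ℕ) < b then 0 else -C.e0⟩ = C.d0 := by
  rcases le_or_gt 0 C.d0 with h | h
  · have he : C.e0 = -1 := by unfold e0; rw [if_pos h]
    rw [he]
    refine (C.r.AlgoMorph C.pM _ C.σ0 ?_).symm
    rintro (g | x) <;> rw [σ0_inv]
    · by_cases hg : b + g' ≤ (C.e g : ℕ)
      · rw [f0, dif_pos hg]
        simp only [locate, pM, Equiv.apply_symm_apply]
        rw [if_neg (by omega), if_neg (by omega)]
      · rw [f0, dif_neg hg]
        simp only [locate, pM]
        rw [if_pos (by omega), if_pos (by omega)]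
    · by_cases hx : b ≤ (C.eB x : ℕ)
      · rw [f0, dif_pos hx]
        simp only [locate, pM, Equiv.apply_symm_apply]
        rw [if_neg (by omega), if_neg (by omega)]
        norm_num
      · rw [f0, dif_neg hx]
        simp only [locate, pM]
        rw [if_pos (by omega), if_pos (by omega)]
  · have he : C.e0 = 1 := by unfold e0; rw [if_neg (not_le.mpr h)]
    rw [he]
    show C.r.algo _ = C.r.algo C.pM
    norm_num [pM]

/-- the view of an activated tower-1 robot always computes `d1` -/
lemma algo_obs1 :
    C.r.algo ⟨fun g => if (C.e g : ℕ) < b + g' then -C.e1 else 0,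
              fun _ => C.e1⟩ = C.d1 := by
  rcases le_or_gt 0 C.d1 with h | h
  · have he : C.e1 = 1 := by unfold e1; rw [if_pos h]
    rw [he]
    show C.r.algo _ = C.r.algo C.pM'
    norm_num [pM']
  · have he : C.e1 = -1 := by unfold e1; rw [if_neg (not_le.mpr h)]
    rw [he]
    refine (C.r.AlgoMorph C.pM' _ C.σ1 ?_).symm
    rintro (g | x) <;> rw [σ1_inv]
    · by_cases hg : (C.e g : ℕ) < b + g'
      · rw [f1, dif_pos hg]
        simp only [locate, pM']
        rw [if_pos hg]
        norm_num
      · rw [f1, dif_neg hg]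
        simp only [locate, pM']
        rw [if_neg hg, if_neg hg]
    · rw [f1]
      simp only [locate, pM', Equiv.apply_symm_apply]
      rw [if_pos (C.eB x).isLt]

/-- initial position -/
def start : G → ℚ := fun g => if (C.e g : ℕ) < b + g' then 0 else 1

/-- the execution under the demon is the two-tower trajectory -/
lemma exec_eq : ∀ n, executeN C.r C.dem C.start n
    = fun g => if (C.e g : ℕ) < b + g' then (C.st n).1 else (C.st n).2
  | 0 => by
    funext g
    simp only [executeN, start, st]
  | n+1 => by
    have ih := exec_eq n
    have hgap := C.one_le_gap n
    have hca : (C.st n).2 - (C.st n).1 ≠ 0 := C.gap_ne n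
    show roundR C.r (Stream'.get C.dem n) (executeN C.r C.dem C.start n) = _
    rw [ih]
    have hget : Stream'.get C.dem n = C.dem n := rfl
    funext g
    by_cases hn : Even n
    · -- even round: tower 0 is activated
      have hda : C.dem n =
        { locate_byz := fun x =>
            if (C.eB x : ℕ) < b then (C.st n).1 else 2*(C.st n).1 - (C.st n).2,
          frame := fun g =>
            if (C.e g : ℕ) < b + g' then C.e0 / ((C.st n).2 - (C.st n).1) else 0 } := by
        rw [dem, if_pos hn]
      rw [hget, hda]
      by_cases hg : (C.e g : ℕ) < b + g'
      · have hk : (C.e0 / ((C.st n).2 - (C.st n).1)) ≠ 0 := div_ne_zero C.e0_ne hca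
        simp only [roundR, if_pos hg, if_neg hk]
        have hpos : simPos (C.e0 / ((C.st n).2 - (C.st n).1)) (C.st n).1
            ⟨fun g => if (C.e g : ℕ) < b + g' then (C.st n).1 else (C.st n).2,
             fun x => if (C.eB x : ℕ) < b then (C.st n).1 else 2*(C.st n).1 - (C.st n).2⟩
            = ⟨fun g => if (C.e g : ℕ) < b + g' then 0 else C.e0,
               fun x => if (C.eB x : ℕ) < b then 0 else -C.e0⟩ := by
          unfold simPos
          congr 1
          · funext y
            dsimp only
            by_cases hy : (C.e y : ℕ) < b + g'
            · rw [if_pos hy, if_pos hy]; ring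
            · rw [if_neg hy, if_neg hy]; field_simp
          · funext x
            dsimp only
            by_cases hx2 : (C.eB x : ℕ) < b
            · rw [if_pos hx2, if_pos hx2]; ring
            · rw [if_neg hx2, if_neg hx2]; field_simp; ring
        rw [hpos, C.algo_obs0]
        rw [st, if_pos hn]
        have key : 1 / (C.e0 / ((C.st n).2 - (C.st n).1)) * C.d0
            = -(((C.st n).2 - (C.st n).1) * |C.d0|) := by
          rw [one_div_div, div_eq_mul_inv, C.e0_inv, mul_assoc, C.e0_mul]
          ring
        rw [key]
        show _ = (C.st n).1 - ((C.st n).2 - (C.st n).1) * |C.d0|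
        ring
      · rw [if_neg hg, st, if_pos hn]
        simp [roundR, hg]
    · -- odd round: tower 1 is activated
      have hda : C.dem n =
        { locate_byz := fun _ => 2*(C.st n).2 - (C.st n).1,
          frame := fun g =>
            if (C.e g : ℕ) < b + g' then 0 else C.e1 / ((C.st n).2 - (C.st n).1) } := by
        rw [dem, if_neg hn]
      rw [hget, hda]
      by_cases hg : (C.e g : ℕ) < b + g'
      · rw [if_pos hg, st, if_neg hn]
        simp [roundR, hg]
      · have hk : (C.e1 / ((C.st n).2 - (C.st n).1)) ≠ 0 := div_ne_zero C.e1_ne hca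
        simp only [roundR, if_neg hg, if_neg hk]
        have hpos : simPos (C.e1 / ((C.st n).2 - (C.st n).1)) (C.st n).2
            ⟨fun g => if (C.e g : ℕ) < b + g' then (C.st n).1 else (C.st n).2,
             fun _ : B => 2*(C.st n).2 - (C.st n).1⟩
            = ⟨fun g => if (C.e g : ℕ) < b + g' then -C.e1 else 0,
               fun _ : B => C.e1⟩ := by
          unfold simPos
          congr 1
          · funext y
            dsimp only
            by_cases hy : (C.e y : ℕ) < b + g'
            · rw [if_pos hy, if_pos hy]; field_simp; ring
            · rw [if_neg hy, if_neg hy]; ring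
          · funext x
            dsimp only
            rw [div_mul_eq_mul_div, div_eq_iff hca]
            ring
        rw [hpos, C.algo_obs1]
        rw [st, if_neg hn]
        have key : 1 / (C.e1 / ((C.st n).2 - (C.st n).1)) * C.d1
            = ((C.st n).2 - (C.st n).1) * |C.d1| := by
          rw [one_div_div, div_eq_mul_inv, C.e1_inv, mul_assoc, C.e1_mul]
        rw [key]

lemma head_drop (m : ℕ) : (Stream'.drop m C.dem).head = C.dem m :=
  congrArg C.dem (Nat.zero_add m)

lemma tail_drop (m : ℕ) :
    Stream'.tail (Stream'.drop m C.dem) = Stream'.drop (m+1) C.dem :=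
  funext fun i => congrArg C.dem (by omega)

lemma frame0 (m : ℕ) (g : G) (hm : Even m) (hg : (C.e g : ℕ) < b + g') :
    (C.dem m).frame g ≠ 0 := by
  rw [dem, if_pos hm]
  simp only [if_pos hg]
  exact div_ne_zero C.e0_ne (C.gap_ne m)

lemma frame1 (m : ℕ) (g : G) (hm : ¬ Even m) (hg : ¬ (C.e g : ℕ) < b + g') :
    (C.dem m).frame g ≠ 0 := by
  rw [dem, if_neg hm]
  simp only [if_neg hg]
  exact div_ne_zero C.e1_ne (C.gap_ne m)

lemma frame0' (m : ℕ) (g : G) (hm : ¬ Even m) (hg : (C.e g : ℕ) < b + g') :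
    (C.dem m).frame g = 0 := by
  rw [dem, if_neg hm]; simp only [if_pos hg]

lemma frame1' (m : ℕ) (g : G) (hm : Even m) (hg : ¬ (C.e g : ℕ) < b + g') :
    (C.dem m).frame g = 0 := by
  rw [dem, if_pos hm]; simp only [if_neg hg]

lemma fair : Fair C.dem := by
  intro n g
  by_cases hg : (C.e g : ℕ) < b + g'
  · by_cases hn : Even n
    · exact .immediately _ (by rw [C.head_drop]; exact C.frame0 n g hn hg)
    · refine .later _ (by rw [C.head_drop]; exact C.frame0' n g hn hg) ?_
      rw [C.tail_drop]
      refine .immediately _ (by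
        rw [C.head_drop]
        exact C.frame0 (n+1) g (Nat.even_add_one.mpr hn) hg)
  · by_cases hn : Even n
    · refine .later _ (by rw [C.head_drop]; exact C.frame1' n g hn hg) ?_
      rw [C.tail_drop]
      refine .immediately _ (by
        rw [C.head_drop]
        exact C.frame1 (n+1) g (by simp [Nat.even_add_one, hn]) hg)
    · exact .immediately _ (by rw [C.head_drop]; exact C.frame1 n g hn hg)

end Ctx

lemma attracted_drop {H : Type} {c ε : ℚ} {s : Stream' (H → ℚ)}
    (h : Attracted c ε s) : ∃ k, Imprisonned c ε (Stream'.drop k s) := by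
  induction h with
  | captured s h => exact ⟨0, h⟩
  | later s _ ih =>
    obtain ⟨k, hk⟩ := ih
    exact ⟨k+1, hk⟩

end Impossibility


/-- convergence is impossible for `2f < n ≤ 3f` under fair demons: if
the correct robots number `b + g' + g'` and the Byzantine robots number `b + g'` with
`g' ≥ 1`, then no robogram is a solution w.r.t. fair demons. -/
theorem no_solution_FAIR_3f {G B : Type} [Fintype G] [Fintype B]
    (b g' : ℕ) (hg' : 1 ≤ g')
    (hG : Fintype.card G = b + g' + g') (hB : Fintype.card B = b + g')
    (r : Robogram G B) :
    ¬ solution r := by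
  intro hsol
  have e : G ≃ Fin (b + g' + g') := Fintype.equivFinOfCardEq hG
  have eB : B ≃ Fin (b + g') := Fintype.equivFinOfCardEq hB
  set C : Impossibility.Ctx G B b g' := ⟨e, eB, r⟩ with hC
  obtain ⟨lim, hatt⟩ := hsol C.start C.dem C.fair (1/4) (by norm_num)
  obtain ⟨k, himp⟩ := Impossibility.attracted_drop hatt
  have hx : Stream'.get (Stream'.drop k (execute r C.dem C.start)) 0
      = executeN C.r C.dem C.start k := congrArg (executeN C.r C.dem C.start) (Nat.zero_add k)
  have h0 := himp 0 (C.e.symm ⟨0, by omega⟩)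
  have h1 := himp 0 (C.e.symm ⟨b + g', by omega⟩)
  rw [hx, C.exec_eq k] at h0 h1
  simp only [Equiv.apply_symm_apply] at h0 h1
  rw [if_pos (by omega)] at h0
  rw [if_neg (by omega)] at h1
  have hgap := C.one_le_gap k
  have ha := abs_le.mp h0
  have hb := abs_le.mp h1
  linarith [ha.1, ha.2, hb.1, hb.2]
end

section
/- If an execution converges in the sense of the solution predicate (for every ε > 0 some center attracts it within ε), and additionally every correct robot's position at every round belongs to a fixed two-element set {a, b} with a ≠ b, and both values a and b are attained by some correct robot at every round, then no center can attract the execution within ε = |a − b|/4; hence such an execution is not convergent. -/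
/-- if at every round every correct robot's position belongs to a fixed
two-element set `{a, b}` with `a ≠ b`, and both values are attained at every round,
then no center attracts the execution within `|a − b|/4`; hence the execution is not
convergent. -/
theorem two_values_not_convergent {G : Type} (e : Stream' (G → ℚ)) (a b : ℚ)
    (hab : a ≠ b)
    (hval : ∀ (n : ℕ) (g : G), Stream'.get e n g = a ∨ Stream'.get e n g = b)
    (ha : ∀ n : ℕ, ∃ g : G, Stream'.get e n g = a)
    (hb : ∀ n : ℕ, ∃ g : G, Stream'.get e n g = b) :
    (∀ c : ℚ, ¬ Attracted c (|a - b| / 4) e) ∧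
    ¬ (∀ ε : ℚ, 0 < ε → ∃ c : ℚ, Attracted c ε e) := by
  have habs : 0 < |a - b| := abs_pos.mpr (sub_ne_zero.mpr hab)
  have key : ∀ c : ℚ, ¬ Attracted c (|a - b| / 4) e := by
    intro c hatt
    -- generalize over e with hypotheses
    have : ∀ (e' : Stream' (G → ℚ)), Attracted c (|a - b| / 4) e' →
        (∀ n : ℕ, ∃ g : G, Stream'.get e' n g = a) →
        (∀ n : ℕ, ∃ g : G, Stream'.get e' n g = b) → False := by
      intro e' h
      induction h with
      | captured e' himp =>
        intro ha' hb'
        obtain ⟨g, hg⟩ := ha' 0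
        obtain ⟨g', hg'⟩ := hb' 0
        have h1 := himp 0 g
        have h2 := himp 0 g'
        rw [hg] at h1; rw [hg'] at h2
        have : |a - b| ≤ |a - b| / 4 + |a - b| / 4 := by
          calc |a - b| = |(c - b) - (c - a)| := by ring_nf
            _ ≤ |c - b| + |c - a| := abs_sub _ _
            _ ≤ |a - b| / 4 + |a - b| / 4 := add_le_add h2 h1
        linarith
      | later e' _ ih =>
        intro ha' hb'
        exact ih (fun n => ha' (n+1)) (fun n => hb' (n+1))
    exact this e hatt ha hb
  refine ⟨key, fun h => ?_⟩
  obtain ⟨c, hc⟩ := h (|a - b| / 4) (by linarith)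
  exact key c hc
end
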